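/- Let $V(t)$ be a bounded adapted $\mathbb{R}^2$-valued process with $|V(t)|$ bounded away from zero, let $\tilde a(t)$ be bounded and adapted, and set $\theta(t) = \tilde a(t) V(t)/|V(t)|^2$. Let $\eta$ be an adapted square-integrable process with $\eta(t)^\top V(t) = 0$ a.e., and set $R = \int_0^T \eta(t)^\top dW_\theta(t)$ where $W_\theta(t) = W(t) + \int_0^t\theta(s)ds$. Then: (a) $R = \int_0^T \eta(t)^\top dW(t)$ (the integrals under the shift coincide since $\theta^\top \eta \equiv 0$); and (b) for any $\gamma$ with $E\int_0^T \gamma^2 \tilde S^2 |V|^2 dt < \infty$, letting $M(T) = \int_0^T \gamma(t)\tilde S(t) V(t)^\top dW(t)$, one has $E[R\, M(T)] = 0$ under the original measure $P$. -/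
import Mathlib


open MeasureTheory Real

/-- An abstract Itô integral over `[0,T]` against the 2-dimensional Brownian
motion `W` under the historical measure `P`. -/
structure ItoInt2 (Ω : Type*) [MeasurableSpace Ω] (P : MeasureTheory.Measure Ω)
    (T : ℝ) where
  Adm : (ℝ → Ω → Fin 2 → ℝ) → Prop
  I : (ℝ → Ω → Fin 2 → ℝ) → Ω → ℝ
  adm_add : ∀ {f g}, Adm f → Adm g → Adm fun t ω => f t ω + g t ω
  I_add : ∀ {f g}, Adm f → Adm g →
    (fun ω => I (fun t ω => f t ω + g t ω) ω) =ᵐ[P] fun ω => I f ω + I g ω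
  mean_zero : ∀ {f}, Adm f → ∫ ω, I f ω ∂P = 0
  isometry : ∀ {f g}, Adm f → Adm g →
    ∫ ω, I f ω * I g ω ∂P =
      ∫ ω, (∫ t in (0:ℝ)..T, (f t ω 0 * g t ω 0 + f t ω 1 * g t ω 1)) ∂P

lemma ae_swap_of_ae_prod {α β : Type*} [MeasurableSpace α] [MeasurableSpace β]
    {μ : Measure α} {ν : Measure β} [SFinite μ] [SFinite ν] {p : α × β → Prop}
    (h : ∀ᵐ z ∂μ.prod ν, p z) : ∀ᵐ y ∂ν, ∀ᵐ x ∂μ, p (x, y) := by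
  set N := toMeasurable (μ.prod ν) {z | ¬ p z} with hN
  have hNm : MeasurableSet N := measurableSet_toMeasurable _ _
  have hN0 : (μ.prod ν) N = 0 := by
    rw [measure_toMeasurable]
    exact h
  have hswap : (ν.prod μ) (Prod.swap ⁻¹' N) = 0 := by
    have := Measure.prod_swap (μ := μ) (ν := ν)
    calc (ν.prod μ) (Prod.swap ⁻¹' N)
        = (Measure.map Prod.swap (μ.prod ν)) (Prod.swap ⁻¹' N) := by rw [this]
      _ = (μ.prod ν) (Prod.swap ⁻¹' (Prod.swap ⁻¹' N)) :=
          Measure.map_apply measurable_swap (measurable_swap hNm)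
      _ = (μ.prod ν) N := by
          have : Prod.swap ⁻¹' (Prod.swap ⁻¹' N) = N := by ext z; simp
          rw [this]
      _ = 0 := hN0
  have h' : ∀ᵐ z ∂ν.prod μ, p z.swap := by
    refine (ae_iff.2 ?_)
    refine measure_mono_null (fun z hz => ?_) hswap
    exact subset_toMeasurable _ _ hz
  exact Measure.ae_ae_of_ae_prod h'


/-- Theorem ThLRM (orthogonality for the minimal kernel): with
`θ = ã V/|V|²` and `η ⊥ V` pointwise a.e., the residual
`R = ∫₀ᵀ η^⊤ dW_θ` (where `W_θ = W + ∫θ ds`, so that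
`R = ∫₀ᵀ η^⊤ dW + ∫₀ᵀ η^⊤ θ dt`) satisfies:
(a) `R = ∫₀ᵀ η^⊤ dW` a.s., since `η^⊤ θ ≡ 0`; and
(b) `E[R · M(T)] = 0` under `P`, where
`M(T) = ∫₀ᵀ γ S̃ V^⊤ dW` is the martingale part of the gains process. -/
theorem stmt15 {Ω : Type*} [m0 : MeasurableSpace Ω] (P : Measure Ω)
    [IsProbabilityMeasure P] (ℱ : Filtration ℝ m0) (T : ℝ) (hT : 0 < T)
    (J : ItoInt2 Ω P T)
    (V : ℝ → Ω → Fin 2 → ℝ) (at' : ℝ → Ω → ℝ)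
    (hVbd : ∃ C, ∀ t ω i, |V t ω i| ≤ C)
    (hVlb : ∃ c > 0, ∀ t ω, c ≤ Real.sqrt (V t ω 0 ^ 2 + V t ω 1 ^ 2))
    (habd : ∃ C, ∀ t ω, |at' t ω| ≤ C)
    (hVa : Adapted ℱ fun t => V t) (haa : Adapted ℱ at')
    (θ : ℝ → Ω → Fin 2 → ℝ)
    (hθ : ∀ t ω, θ t ω =
      (at' t ω / (V t ω 0 ^ 2 + V t ω 1 ^ 2)) • V t ω)
    (η : ℝ → Ω → Fin 2 → ℝ) (hηAdm : J.Adm η)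
    (hηV : ∀ᵐ p ∂((MeasureTheory.volume.restrict (Set.Icc (0:ℝ) T)).prod P),
      η p.1 p.2 0 * V p.1 p.2 0 + η p.1 p.2 1 * V p.1 p.2 1 = 0)
    (R : Ω → ℝ)
    (hR : ∀ ω, R ω = J.I η ω +
      ∫ t in (0:ℝ)..T, (η t ω 0 * θ t ω 0 + η t ω 1 * θ t ω 1)) :
    (R =ᵐ[P] fun ω => J.I η ω) ∧
    (∀ γ St : ℝ → Ω → ℝ,
      J.Adm (fun t ω => (γ t ω * St t ω) • V t ω) →
      Integrable (fun ω => ∫ t in (0:ℝ)..T,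
        (γ t ω * St t ω) ^ 2 * (V t ω 0 ^ 2 + V t ω 1 ^ 2)) P →
      ∫ ω, R ω * J.I (fun t ω => (γ t ω * St t ω) • V t ω) ω ∂P = 0) := by
  have hae : ∀ᵐ ω ∂P, ∀ᵐ t ∂(MeasureTheory.volume.restrict (Set.Icc (0:ℝ) T)),
      η t ω 0 * V t ω 0 + η t ω 1 * V t ω 1 = 0 := ae_swap_of_ae_prod hηV
  have haeIoc : ∀ᵐ ω ∂P, ∀ᵐ t ∂(MeasureTheory.volume.restrict (Set.Ioc (0:ℝ) T)),
      η t ω 0 * V t ω 0 + η t ω 1 * V t ω 1 = 0 := by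
    filter_upwards [hae] with ω hω
    exact ae_restrict_of_ae_restrict_of_subset Set.Ioc_subset_Icc_self hω
  have hA : R =ᵐ[P] fun ω => J.I η ω := by
    filter_upwards [haeIoc] with ω hω
    rw [hR ω]
    have hzero : (∫ t in (0:ℝ)..T,
        (η t ω 0 * θ t ω 0 + η t ω 1 * θ t ω 1)) = 0 := by
      rw [intervalIntegral.integral_of_le hT.le]
      refine integral_eq_zero_of_ae ?_
      filter_upwards [hω] with t ht
      rw [hθ t ω]
      simp only [Pi.smul_apply, smul_eq_mul, Pi.zero_apply]
      linear_combination (at' t ω / (V t ω 0 ^ 2 + V t ω 1 ^ 2)) * ht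
    rw [hzero, add_zero]
  refine ⟨hA, ?_⟩
  intro γ St hAdm _
  have h1 : ∫ ω, R ω * J.I (fun t ω => (γ t ω * St t ω) • V t ω) ω ∂P
      = ∫ ω, J.I η ω * J.I (fun t ω => (γ t ω * St t ω) • V t ω) ω ∂P := by
    refine integral_congr_ae ?_
    filter_upwards [hA] with ω hω
    rw [hω]
  rw [h1, J.isometry hηAdm hAdm]
  refine integral_eq_zero_of_ae ?_
  filter_upwards [haeIoc] with ω hω
  rw [intervalIntegral.integral_of_le hT.le]
  refine integral_eq_zero_of_ae ?_
  filter_upwards [hω] with t ht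
  simp only [Pi.smul_apply, smul_eq_mul, Pi.zero_apply]
  linear_combination (γ t ω * St t ω) * ht
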